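/- Let K ≥ 1, fix μ₀ ∈ ℝⁿ and set π_k = 1/K for all k. Let B_1, …, B_K be constant real n×n matrices and let Σ_k : ℝ → (real symmetric positive definite n×n matrices) be differentiable curves satisfying Σ_k'(t) = Σ_k(t)·B_k for all t. Define S(t) = S(π, μ, Σ(t)) with all means equal to μ₀. Then for every t, S(t) is invertible, S(t)⁻¹·S'(t) = [[blockdiag(B_1, …, B_K), 0],[M, 0]], where M is the K×Kn block-diagonal matrix with k-th diagonal block the row vector −μ₀ᵀB_k; in particular, S(t)⁻¹·S'(t) is constant in t. -/

import Mathlib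

open Matrix

/-- Block `A = blockdiag (Σₖ + πₖ μₖ μₖᵀ)ₖ` of the embedding. -/
noncomputable def gmmA {n K : ℕ} (π : Fin K → ℝ) (μ : Fin K → Fin n → ℝ)
    (Sig : Fin K → Matrix (Fin n) (Fin n) ℝ) :
    Matrix (Fin n × Fin K) (Fin n × Fin K) ℝ :=
  Matrix.blockDiagonal fun k => Sig k + π k • Matrix.vecMulVec (μ k) (μ k)

/-- Block `X`: Kn×K block-diagonal matrix whose k-th diagonal block is the column `πₖ μₖ`. -/
noncomputable def gmmX {n K : ℕ} (π : Fin K → ℝ) (μ : Fin K → Fin n → ℝ) :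
    Matrix (Fin n × Fin K) (Fin K) ℝ :=
  fun p l => if p.2 = l then π p.2 * μ p.2 p.1 else 0

/-- Block `B = diag (π₁, …, π_K)`. -/
noncomputable def gmmB {K : ℕ} (π : Fin K → ℝ) : Matrix (Fin K) (Fin K) ℝ :=
  Matrix.diagonal π

/-- The embedding matrix `S(π, μ, Σ) = [[A, X], [Xᵀ, B]]`. -/
noncomputable def gmmS {n K : ℕ} (π : Fin K → ℝ) (μ : Fin K → Fin n → ℝ)
    (Sig : Fin K → Matrix (Fin n) (Fin n) ℝ) :
    Matrix (Fin n × Fin K ⊕ Fin K) (Fin n × Fin K ⊕ Fin K) ℝ :=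
  Matrix.fromBlocks (gmmA π μ Sig) (gmmX π μ) (gmmX π μ)ᵀ (gmmB π)

/-!
Let `Y = gmmX 1 μ`, the block-diagonal matrix with columns `μₖ`, so that `X = Y diag(π)` and
`A = blockdiag(Σₖ) + X Yᵀ`. Then `S = U · diag(blockdiag(Σₖ), diag(π)) · Uᵀ` with
`U = [[1, Y], [0, 1]]`, hence `det S = ∏ det Σₖ · ∏ πₖ ≠ 0`. With `π` and `μ` fixed only the
`Σₖ` move, so `S' = [[blockdiag(Σₖ Bₖ), 0], [0, 0]]`, and a block computation gives `S' = S G` for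
`G = gmmGenerator μ B = [[blockdiag(Bₖ), 0], [-Yᵀ blockdiag(Bₖ), 0]]`, which does not depend on `t`.
-/

namespace Matrix

variable {l m o : Type*} {s : ℝ}

theorem hasDerivAt_blockDiagonal_apply [DecidableEq o] {M : ℝ → o → Matrix l m ℝ}
    {M' : o → Matrix l m ℝ} (h : ∀ k i j, HasDerivAt (fun u => M u k i j) (M' k i j) s)
    (p : l × o) (q : m × o) :
    HasDerivAt (fun u => blockDiagonal (M u) p q) (blockDiagonal M' p q) s := by
  by_cases hpq : p.2 = q.2
  · simpa only [blockDiagonal_apply, hpq, if_true] using h _ _ _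
  · simpa only [blockDiagonal_apply, hpq, if_false] using hasDerivAt_const s (0 : ℝ)

theorem hasDerivAt_fromBlocks_apply {l' m' : Type*} {A : ℝ → Matrix l m ℝ}
    {B : ℝ → Matrix l m' ℝ} {C : ℝ → Matrix l' m ℝ} {D : ℝ → Matrix l' m' ℝ}
    {A' : Matrix l m ℝ} {B' : Matrix l m' ℝ} {C' : Matrix l' m ℝ} {D' : Matrix l' m' ℝ}
    (hA : ∀ i j, HasDerivAt (fun u => A u i j) (A' i j) s)
    (hB : ∀ i j, HasDerivAt (fun u => B u i j) (B' i j) s)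
    (hC : ∀ i j, HasDerivAt (fun u => C u i j) (C' i j) s)
    (hD : ∀ i j, HasDerivAt (fun u => D u i j) (D' i j) s) :
    ∀ i j, HasDerivAt (fun u => fromBlocks (A u) (B u) (C u) (D u) i j)
      (fromBlocks A' B' C' D' i j) s := by
  rintro (i | i) (j | j)
  exacts [hA i j, hB i j, hC i j, hD i j]

end Matrix

section GMM

variable {n K : ℕ}

theorem gmmX_eq_mul_diagonal (π : Fin K → ℝ) (μ : Fin K → Fin n → ℝ) :
    gmmX π μ = gmmX 1 μ * diagonal π := by
  ext p l
  simp [gmmX, mul_apply, diagonal_apply, mul_comm]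

theorem gmmA_eq_add (π : Fin K → ℝ) (μ : Fin K → Fin n → ℝ)
    (Sig : Fin K → Matrix (Fin n) (Fin n) ℝ) :
    gmmA π μ Sig = blockDiagonal Sig + gmmX π μ * (gmmX 1 μ)ᵀ := by
  ext p q
  by_cases h : p.2 = q.2
  · simp [gmmA, gmmX, mul_apply, blockDiagonal_apply, vecMulVec_apply, h, mul_assoc]
  · simp [gmmA, gmmX, mul_apply, blockDiagonal_apply, h]

theorem transpose_gmmX_one_mul_blockDiagonal (μ : Fin K → Fin n → ℝ)
    (Bm : Fin K → Matrix (Fin n) (Fin n) ℝ) :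
    (gmmX 1 μ)ᵀ * blockDiagonal Bm =
      of fun l p => if p.2 = l then (μ l ᵥ* Bm l) p.1 else 0 := by
  ext l p
  by_cases h : p.2 = l
  · simp [gmmX, mul_apply, blockDiagonal_apply, h, vecMul, dotProduct, Fintype.sum_prod_type]
  · simp only [gmmX, mul_apply, blockDiagonal_apply, transpose_apply, of_apply, if_neg h]
    exact Finset.sum_eq_zero fun q _ => by split_ifs <;> simp_all

theorem gmmS_eq_mul_mul_transpose (π : Fin K → ℝ) (μ : Fin K → Fin n → ℝ)
    (Sig : Fin K → Matrix (Fin n) (Fin n) ℝ) :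
    gmmS π μ Sig = fromBlocks 1 (gmmX 1 μ) 0 1 *
      fromBlocks (blockDiagonal Sig) 0 0 (diagonal π) * (fromBlocks 1 (gmmX 1 μ) 0 1)ᵀ := by
  simp [gmmS, gmmB, fromBlocks_transpose, fromBlocks_multiply, gmmA_eq_add,
    gmmX_eq_mul_diagonal π, Matrix.mul_assoc]

theorem det_gmmS (π : Fin K → ℝ) (μ : Fin K → Fin n → ℝ)
    (Sig : Fin K → Matrix (Fin n) (Fin n) ℝ) :
    (gmmS π μ Sig).det = (∏ k, (Sig k).det) * ∏ k, π k := by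
  rw [gmmS_eq_mul_mul_transpose, det_mul, det_mul, det_transpose, det_fromBlocks_zero₂₁,
    det_fromBlocks_zero₂₁, det_blockDiagonal, det_diagonal]
  simp

theorem isUnit_det_gmmS {π : Fin K → ℝ} (μ : Fin K → Fin n → ℝ)
    {Sig : Fin K → Matrix (Fin n) (Fin n) ℝ} (hπ : ∀ k, π k ≠ 0)
    (hSig : ∀ k, (Sig k).det ≠ 0) :
    IsUnit (gmmS π μ Sig).det := by
  rw [det_gmmS, isUnit_iff_ne_zero]
  exact mul_ne_zero (Finset.prod_ne_zero_iff.2 fun k _ => hSig k)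
    (Finset.prod_ne_zero_iff.2 fun k _ => hπ k)

theorem hasDerivAt_gmmS_apply (π : Fin K → ℝ) (μ : Fin K → Fin n → ℝ)
    {Sig : ℝ → Fin K → Matrix (Fin n) (Fin n) ℝ} {Sig' : Fin K → Matrix (Fin n) (Fin n) ℝ}
    {s : ℝ} (h : ∀ k i j, HasDerivAt (fun u => Sig u k i j) (Sig' k i j) s) :
    ∀ i j, HasDerivAt (fun u => gmmS π μ (Sig u) i j)
      (fromBlocks (blockDiagonal Sig') 0 0 0 i j) s :=
  hasDerivAt_fromBlocks_apply
    (hasDerivAt_blockDiagonal_apply fun k i j => (h k i j).add_const _)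
    (fun _ _ => hasDerivAt_const _ _) (fun _ _ => hasDerivAt_const _ _)
    (fun _ _ => hasDerivAt_const _ _)

noncomputable def gmmGenerator (μ : Fin K → Fin n → ℝ)
    (Bm : Fin K → Matrix (Fin n) (Fin n) ℝ) :
    Matrix (Fin n × Fin K ⊕ Fin K) (Fin n × Fin K ⊕ Fin K) ℝ :=
  fromBlocks (blockDiagonal Bm) 0 (-((gmmX 1 μ)ᵀ * blockDiagonal Bm)) 0

theorem gmmGenerator_eq (μ : Fin K → Fin n → ℝ) (Bm : Fin K → Matrix (Fin n) (Fin n) ℝ) :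
    gmmGenerator μ Bm = fromBlocks (blockDiagonal Bm) 0
      (of fun l p => if p.2 = l then -((μ l ᵥ* Bm l) p.1) else 0) 0 := by
  rw [gmmGenerator, transpose_gmmX_one_mul_blockDiagonal]
  congr 1
  ext l p
  by_cases h : p.2 = l <;> simp [h]

theorem gmmS_mul_gmmGenerator (π : Fin K → ℝ) (μ : Fin K → Fin n → ℝ)
    (Sig Bm : Fin K → Matrix (Fin n) (Fin n) ℝ) :
    gmmS π μ Sig * gmmGenerator μ Bm =
      fromBlocks (blockDiagonal fun k => Sig k * Bm k) 0 0 0 := by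
  simp [gmmS, gmmB, gmmGenerator, fromBlocks_multiply, gmmA_eq_add, gmmX_eq_mul_diagonal π,
    Matrix.add_mul, Matrix.mul_assoc, blockDiagonal_mul]

end GMM

theorem gmm_geodesic_const_general {n K : ℕ} (μ0 : Fin n → ℝ)
    (Bm : Fin K → Matrix (Fin n) (Fin n) ℝ)
    (Sig : ℝ → Fin K → Matrix (Fin n) (Fin n) ℝ)
    (hSig : ∀ s k, (Sig s k).PosDef)
    (hderiv : ∀ s k i j, HasDerivAt (fun u => Sig u k i j) ((Sig s k * Bm k) i j) s)
    (DS : ℝ → Matrix (Fin n × Fin K ⊕ Fin K) (Fin n × Fin K ⊕ Fin K) ℝ)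
    (hDS : ∀ s i j,
      HasDerivAt (fun u => gmmS (fun _ => (K : ℝ)⁻¹) (fun _ => μ0) (Sig u) i j)
        (DS s i j) s) :
    (∀ s : ℝ,
      IsUnit (gmmS (fun _ => (K : ℝ)⁻¹) (fun _ => μ0) (Sig s)) ∧
      (gmmS (fun _ => (K : ℝ)⁻¹) (fun _ => μ0) (Sig s))⁻¹ * DS s =
        Matrix.fromBlocks (Matrix.blockDiagonal Bm) 0
          (fun (l : Fin K) (p : Fin n × Fin K) =>
            if p.2 = l then -((μ0 ᵥ* Bm l) p.1) else 0)
          0) ∧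
    ∀ s u : ℝ,
      (gmmS (fun _ => (K : ℝ)⁻¹) (fun _ => μ0) (Sig s))⁻¹ * DS s =
        (gmmS (fun _ => (K : ℝ)⁻¹) (fun _ => μ0) (Sig u))⁻¹ * DS u := by
  have hunit : ∀ s, IsUnit (gmmS (fun _ => (K : ℝ)⁻¹) (fun _ => μ0) (Sig s)).det := fun s =>
    isUnit_det_gmmS _ (fun k => inv_ne_zero (Nat.cast_ne_zero.2 k.pos.ne'))
      fun k => (hSig s k).det_pos.ne'
  have hDS_eq : ∀ s, DS s = gmmS (fun _ => (K : ℝ)⁻¹) (fun _ => μ0) (Sig s) *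
      gmmGenerator (fun _ => μ0) Bm := fun s => by
    rw [gmmS_mul_gmmGenerator]
    ext i j
    exact (hDS s i j).unique (hasDerivAt_gmmS_apply _ _ (hderiv s) i j)
  have hconst : ∀ s, (gmmS (fun _ => (K : ℝ)⁻¹) (fun _ => μ0) (Sig s))⁻¹ * DS s =
      gmmGenerator (fun _ => μ0) Bm := fun s => by
    rw [hDS_eq]
    exact nonsing_inv_mul_cancel_left _ _ (hunit s)
  exact ⟨fun s => ⟨(isUnit_iff_isUnit_det _).2 (hunit s), (hconst s).trans (gmmGenerator_eq _ Bm)⟩,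
    fun s u => (hconst s).trans (hconst u).symm⟩

/-- With fixed means `μ₀`, uniform mixing coefficients `πₖ = 1/K`, and curves of
covariances satisfying `Σₖ'(s) = Σₖ(s) Bₖ`, the matrix `S(s)` is invertible and
`S(s)⁻¹ S'(s) = [[blockdiag (B₁, …, B_K), 0], [M, 0]]` where the k-th diagonal
block of `M` is the row vector `−μ₀ᵀ Bₖ`; in particular `S(s)⁻¹ S'(s)` is
constant in `s`. -/
theorem gmm_geodesic_const {n K : ℕ} (hK : 1 ≤ K) (μ0 : Fin n → ℝ)
    (Bm : Fin K → Matrix (Fin n) (Fin n) ℝ)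
    (Sig : ℝ → Fin K → Matrix (Fin n) (Fin n) ℝ)
    (hSig : ∀ s k, (Sig s k).PosDef)
    (hderiv : ∀ s k i j, HasDerivAt (fun u => Sig u k i j) ((Sig s k * Bm k) i j) s)
    (DS : ℝ → Matrix (Fin n × Fin K ⊕ Fin K) (Fin n × Fin K ⊕ Fin K) ℝ)
    (hDS : ∀ s i j,
      HasDerivAt (fun u => gmmS (fun _ => (K : ℝ)⁻¹) (fun _ => μ0) (Sig u) i j)
        (DS s i j) s) :
    (∀ s : ℝ,
      IsUnit (gmmS (fun _ => (K : ℝ)⁻¹) (fun _ => μ0) (Sig s)) ∧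
      (gmmS (fun _ => (K : ℝ)⁻¹) (fun _ => μ0) (Sig s))⁻¹ * DS s =
        Matrix.fromBlocks (Matrix.blockDiagonal Bm) 0
          (fun (l : Fin K) (p : Fin n × Fin K) =>
            if p.2 = l then -((μ0 ᵥ* Bm l) p.1) else 0)
          0) ∧
    ∀ s u : ℝ,
      (gmmS (fun _ => (K : ℝ)⁻¹) (fun _ => μ0) (Sig s))⁻¹ * DS s =
        (gmmS (fun _ => (K : ℝ)⁻¹) (fun _ => μ0) (Sig u))⁻¹ * DS u :=
  gmm_geodesic_const_general μ0 Bm Sig hSig hderiv DS hDS
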